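/- Let p be a pmf on ℕ with finite mean, and let S₁, S₂ be i.i.d. with pmf p. Define G : [0,∞) → ℝ by G(c) = sup{ H(law of (X−S₁)₊ + S₂) : X an ℕ-valued random variable independent of (S₁,S₂) with E[(X−S₁)₊] ≤ c }. Then G is real-valued (finite), nonnegative, nondecreasing, and concave on [0,∞). -/

import Mathlib

open scoped BigOperators

/-- Shannon entropy (natural log) of a pmf on ℕ. -/
noncomputable def Hent (p : ℕ → ℝ) : ℝ := ∑' n, -(p n * Real.log (p n))

/-- `p` is a probability mass function on ℕ. -/
def IsPmf (p : ℕ → ℝ) : Prop := (∀ n, 0 ≤ p n) ∧ (∑' n, p n) = 1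

/-- pmf of `W + S` for independent `W ~ w`, `S ~ p`. -/
noncomputable def convPmf (w p : ℕ → ℝ) : ℕ → ℝ :=
  fun n => ∑ j ∈ Finset.range (n + 1), w j * p (n - j)

/-- pmf of `(S - τ)₊` for `S ~ p` (truncated subtraction on ℕ). -/
noncomputable def truncSubPmf (p : ℕ → ℝ) (τ : ℕ) : ℕ → ℝ :=
  fun n => ∑' i, if i - τ = n then p i else 0

/-- pmf of `(X - T)₊` for independent `X ~ x`, `T ~ q`. -/
noncomputable def subPairPmf (x q : ℕ → ℝ) : ℕ → ℝ :=
  fun n => ∑' i, ∑' j, if i - j = n then x i * q j else 0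

/-- `w` has (well-defined) mean at most `c`. -/
def MeanLe (w : ℕ → ℝ) (c : ℝ) : Prop :=
  Summable (fun n : ℕ => (n : ℝ) * w n) ∧ (∑' n : ℕ, (n : ℝ) * w n) ≤ c

/-- Output entropies `H((X - (S₁ - τ)₊)₊ + S₂)` over admissible laws of `X`
(independent of `(S₁, S₂)`, with `E[(X - (S₁ - τ)₊)₊] ≤ c`);
this is the generalized-feedback maximum output entropy problem. -/
def genFB (p : ℕ → ℝ) (τ : ℕ) (c : ℝ) : Set ℝ :=
  {h | ∃ x : ℕ → ℝ, IsPmf x ∧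
    MeanLe (subPairPmf x (truncSubPmf p τ)) c ∧
    h = Hent (convPmf (subPairPmf x (truncSubPmf p τ)) p)}

/-- Output entropies `H(W + S)` over admissible laws of `W` (independent of `S`,
nonnegative, with `E[W] ≤ c`); this is the full-feedback maximum output entropy problem. -/
def fullFB (p : ℕ → ℝ) (c : ℝ) : Set ℝ :=
  {h | ∃ w : ℕ → ℝ, IsPmf w ∧ MeanLe w c ∧ h = Hent (convPmf w p)}

/-- Output entropies `H((X - S₁)₊ + S₂)` over admissible laws of `X` (independent of
`(S₁, S₂)` which are i.i.d. `p`, with `E[(X - S₁)₊] ≤ c`); the weak-feedback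
maximum output entropy problem. -/
def weakFB (p : ℕ → ℝ) (c : ℝ) : Set ℝ :=
  {h | ∃ x : ℕ → ℝ, IsPmf x ∧ MeanLe (subPairPmf x p) c ∧
    h = Hent (convPmf (subPairPmf x p) p)}

/-! Both the law of `(X - S₁)₊` and that of `(X - S₁)₊ + S₂` depend affinely on the law of `X`,
and so does the cost `E[(X - S₁)₊]`. Mixing admissible inputs for the costs `c` and `d` with
weights `a, b` therefore gives an admissible input for the cost `a c + b d` whose output law is the
same mixture of the two output laws, and concavity of `negMulLog` makes the output entropy at least
`a h₁ + b h₂`. The suprema are finite because the output has mean at most `c + E[S]`, and by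
Gibbs' inequality against the geometric law `2^-(n+1)` a pmf on `ℕ` with mean `μ` has entropy at
most `(1 + μ) log 2`. -/

open Real
open scoped Pointwise

namespace IsPmf

variable {p q : ℕ → ℝ}

lemma hasSum (hp : IsPmf p) : HasSum p 1 := by
  have hs : Summable p := by
    by_contra h
    simpa [tsum_eq_zero_of_not_summable h] using hp.2
  exact hs.hasSum_iff.mpr hp.2

lemma summable (hp : IsPmf p) : Summable p := hp.hasSum.summable

lemma le_one (hp : IsPmf p) (n : ℕ) : p n ≤ 1 :=
  hp.2 ▸ hp.summable.le_tsum n fun j _ => hp.1 j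

lemma of_hasSum (h0 : ∀ n, 0 ≤ p n) (h : HasSum p 1) : IsPmf p := ⟨h0, h.tsum_eq⟩

lemma convex_comb (hp : IsPmf p) (hq : IsPmf q) {a b : ℝ} (ha : 0 ≤ a) (hb : 0 ≤ b)
    (hab : a + b = 1) : IsPmf fun n => a * p n + b * q n :=
  of_hasSum (fun n => add_nonneg (mul_nonneg ha (hp.1 n)) (mul_nonneg hb (hq.1 n)))
    (by simpa [hab] using (hp.hasSum.mul_left a).add (hq.hasSum.mul_left b))

end IsPmf

lemma MeanLe.convex_comb {u v : ℕ → ℝ} {c d a b : ℝ} (hu : MeanLe u c) (hv : MeanLe v d)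
    (ha : 0 ≤ a) (hb : 0 ≤ b) : MeanLe (fun n => a * u n + b * v n) (a * c + b * d) := by
  have h : HasSum (fun n : ℕ => (n : ℝ) * (a * u n + b * v n))
      (a * ∑' n : ℕ, (n : ℝ) * u n + b * ∑' n : ℕ, (n : ℝ) * v n) :=
    ((hu.1.hasSum.mul_left a).add (hv.1.hasSum.mul_left b)).congr_fun fun n => by ring
  exact ⟨h.summable, h.tsum_eq ▸ add_le_add (mul_le_mul_of_nonneg_left hu.2 ha)
    (mul_le_mul_of_nonneg_left hv.2 hb)⟩

lemma HasSum.tsum_ite_fiberwise {α β γ : Type*} [AddCommGroup α] [UniformSpace α]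
    [IsUniformAddGroup α] [CompleteSpace α] [T2Space α] [DecidableEq γ] {F : β → α} {a : α}
    (h : HasSum F a) (g : β → γ) : HasSum (fun c => ∑' b, if g b = c then F b else 0) a := by
  convert h.tsum_fiberwise g using 2 with c
  rw [tsum_subtype]
  congr with b
  by_cases hb : g b = c <;> simp [hb]

section subPairPmf

variable {x q : ℕ → ℝ}

lemma hasSum_subPairPmf (hs : Summable fun ij : ℕ × ℕ => x ij.1 * q ij.2) (n : ℕ) :
    HasSum (fun ij : ℕ × ℕ => if ij.1 - ij.2 = n then x ij.1 * q ij.2 else 0)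
      (subPairPmf x q n) := by
  have hn : Summable fun ij : ℕ × ℕ => if ij.1 - ij.2 = n then x ij.1 * q ij.2 else 0 :=
    (hs.indicator {ij | ij.1 - ij.2 = n}).congr fun ij => by simp [Set.indicator_apply]
  rw [subPairPmf, ← hn.tsum_prod' fun i => hn.prod_factor i]
  exact hn.hasSum

lemma hasSum_mul_prod_of_isPmf (hx : IsPmf x) (hq : IsPmf q) :
    HasSum (fun ij : ℕ × ℕ => x ij.1 * q ij.2) 1 := by
  simpa using hx.hasSum.mul hq.hasSum (hx.summable.mul_of_nonneg hq.summable hx.1 hq.1)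

lemma subPairPmf_isPmf (hx : IsPmf x) (hq : IsPmf q) : IsPmf (subPairPmf x q) := by
  have hs := hasSum_mul_prod_of_isPmf hx hq
  refine .of_hasSum (fun n => tsum_nonneg fun i => tsum_nonneg fun j => ?_) ?_
  · split_ifs
    exacts [mul_nonneg (hx.1 i) (hq.1 j), le_rfl]
  · exact (hs.tsum_ite_fiberwise fun ij => ij.1 - ij.2).congr_fun fun n =>
      (hasSum_subPairPmf hs.summable n).tsum_eq.symm

lemma subPairPmf_linear {x₁ x₂ : ℕ → ℝ} (hs₁ : Summable fun ij : ℕ × ℕ => x₁ ij.1 * q ij.2)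
    (hs₂ : Summable fun ij : ℕ × ℕ => x₂ ij.1 * q ij.2) (a b : ℝ) :
    subPairPmf (fun n => a * x₁ n + b * x₂ n) q
      = fun n => a * subPairPmf x₁ q n + b * subPairPmf x₂ q n := by
  have hs : Summable fun ij : ℕ × ℕ => (a * x₁ ij.1 + b * x₂ ij.1) * q ij.2 :=
    ((hs₁.mul_left a).add (hs₂.mul_left b)).congr fun ij => by ring
  funext n
  refine (hasSum_subPairPmf hs n).unique ?_
  refine (((hasSum_subPairPmf hs₁ n).mul_left a).add
    ((hasSum_subPairPmf hs₂ n).mul_left b)).congr_fun fun ij => ?_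
  split_ifs <;> ring

end subPairPmf

section convPmf

variable {w p : ℕ → ℝ}

lemma hasSum_convPmf {s t : ℝ} (hw : HasSum w s) (hp : HasSum p t) :
    HasSum (convPmf w p) (s * t) := by
  have h := hasSum_sum_range_mul_of_summable_norm (f := w) (g := p)
    (by simpa only [Real.norm_eq_abs] using hw.summable.abs)
    (by simpa only [Real.norm_eq_abs] using hp.summable.abs)
  rwa [hw.tsum_eq, hp.tsum_eq] at h

lemma convPmf_isPmf (hw : IsPmf w) (hp : IsPmf p) : IsPmf (convPmf w p) :=
  .of_hasSum (fun n => Finset.sum_nonneg fun j _ => mul_nonneg (hw.1 j) (hp.1 (n - j)))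
    (by simpa using hasSum_convPmf hw.hasSum hp.hasSum)

lemma convPmf_linear (w₁ w₂ : ℕ → ℝ) (a b : ℝ) :
    convPmf (fun n => a * w₁ n + b * w₂ n) p
      = fun n => a * convPmf w₁ p n + b * convPmf w₂ p n := by
  funext n
  simp only [convPmf, add_mul, Finset.sum_add_distrib, Finset.mul_sum, mul_assoc]

lemma natCast_mul_convPmf (n : ℕ) :
    (n : ℝ) * convPmf w p n
      = convPmf (fun k => (k : ℝ) * w k) p n + convPmf w (fun k => (k : ℝ) * p k) n := by
  simp only [convPmf, Finset.mul_sum, ← Finset.sum_add_distrib]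
  refine Finset.sum_congr rfl fun k hk => ?_
  rw [Nat.cast_sub (Nat.lt_succ_iff.mp (Finset.mem_range.mp hk))]
  ring

lemma meanLe_convPmf {c d : ℝ} (hw : IsPmf w) (hp : IsPmf p) (hwc : MeanLe w c)
    (hpd : MeanLe p d) : MeanLe (convPmf w p) (c + d) := by
  have h := (hasSum_convPmf hwc.1.hasSum hp.hasSum).add (hasSum_convPmf hw.hasSum hpd.1.hasSum)
  rw [mul_one, one_mul, ← funext natCast_mul_convPmf] at h
  exact ⟨h.summable, h.tsum_eq ▸ add_le_add hwc.2 hpd.2⟩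

end convPmf

section entropy

variable {q : ℕ → ℝ}

lemma hent_eq_tsum_negMulLog : Hent q = ∑' n, negMulLog (q n) := by
  simp only [Hent, negMulLog_eq_neg]

lemma negMulLog_le_mul_neg_log_add_sub {x r : ℝ} (hx : 0 ≤ x) (hr : 0 < r) :
    negMulLog x ≤ x * -log r + (r - x) := by
  calc negMulLog x = r * negMulLog (x / r) + x / r * negMulLog r := by
        rw [← negMulLog_mul, div_mul_cancel₀ x hr.ne']
    _ ≤ r * (1 - x / r) + x / r * negMulLog r := by
        gcongr
        exact negMulLog_le_one_sub_self (div_nonneg hx hr.le)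
    _ = x * -log r + (r - x) := by
        rw [negMulLog]
        field_simp
        ring

lemma negMulLog_le_geometric {x : ℝ} (hx : 0 ≤ x) (n : ℕ) :
    negMulLog x ≤ log 2 * (n * x + x) + ((1 / 2) ^ (n + 1) - x) := by
  have h := negMulLog_le_mul_neg_log_add_sub hx (by positivity : (0 : ℝ) < (1 / 2) ^ (n + 1))
  rw [log_pow, one_div, log_inv] at h
  push_cast at h
  linarith

lemma IsPmf.hasSum_geometric_majorant (hq : IsPmf q)
    (hm : Summable fun n : ℕ => (n : ℝ) * q n) :
    HasSum (fun n : ℕ => log 2 * (n * q n + q n) + ((1 / 2) ^ (n + 1) - q n))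
      (log 2 * (∑' n : ℕ, (n : ℝ) * q n + 1)) := by
  have hgeom : HasSum (fun n : ℕ => ((1 : ℝ) / 2) ^ (n + 1)) 1 := by
    simpa [pow_succ] using hasSum_geometric_two.mul_right (1 / 2 : ℝ)
  simpa using ((hm.hasSum.add hq.hasSum).mul_left (log 2)).add (hgeom.sub hq.hasSum)

lemma IsPmf.summable_negMulLog (hq : IsPmf q) (hm : Summable fun n : ℕ => (n : ℝ) * q n) :
    Summable fun n => negMulLog (q n) :=
  .of_nonneg_of_le (fun n => negMulLog_nonneg (hq.1 n) (hq.le_one n))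
    (fun n => negMulLog_le_geometric (hq.1 n) n) (hq.hasSum_geometric_majorant hm).summable

lemma IsPmf.hent_le {c : ℝ} (hq : IsPmf q) (hm : MeanLe q c) : Hent q ≤ log 2 * (1 + c) := by
  rw [hent_eq_tsum_negMulLog]
  calc ∑' n, negMulLog (q n) ≤ log 2 * (∑' n : ℕ, (n : ℝ) * q n + 1) :=
        hasSum_le (fun n => negMulLog_le_geometric (hq.1 n) n)
          (hq.summable_negMulLog hm.1).hasSum (hq.hasSum_geometric_majorant hm.1)
    _ ≤ log 2 * (1 + c) :=
        mul_le_mul_of_nonneg_left (by linarith [hm.2]) (log_nonneg one_le_two)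

lemma IsPmf.hent_nonneg (hq : IsPmf q) : 0 ≤ Hent q := by
  rw [hent_eq_tsum_negMulLog]
  exact tsum_nonneg fun n => negMulLog_nonneg (hq.1 n) (hq.le_one n)

lemma hent_convex_comb_ge {u v : ℕ → ℝ} {a b : ℝ} (hu : ∀ n, 0 ≤ u n) (hv : ∀ n, 0 ≤ v n)
    (ha : 0 ≤ a) (hb : 0 ≤ b) (hab : a + b = 1) (hsu : Summable fun n => negMulLog (u n))
    (hsv : Summable fun n => negMulLog (v n))
    (hsm : Summable fun n => negMulLog (a * u n + b * v n)) :
    a * Hent u + b * Hent v ≤ Hent fun n => a * u n + b * v n := by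
  simp only [hent_eq_tsum_negMulLog]
  exact hasSum_le (fun n => concaveOn_negMulLog.2 (hu n) (hv n) ha hb hab)
    ((hsu.hasSum.mul_left a).add (hsv.hasSum.mul_left b)) hsm.hasSum

end entropy

lemma concaveOn_sSup_of_convex_comb {E : Type*} [AddCommMonoid E] [Module ℝ E] {s : Set E}
    (hs : Convex ℝ s) {S : E → Set ℝ} (hne : ∀ c ∈ s, (S c).Nonempty)
    (hbdd : ∀ c ∈ s, BddAbove (S c))
    (hmix : ∀ c ∈ s, ∀ d ∈ s, ∀ a b : ℝ, 0 ≤ a → 0 ≤ b → a + b = 1 →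
      ∀ h₁ ∈ S c, ∀ h₂ ∈ S d, ∃ h ∈ S (a • c + b • d), a * h₁ + b * h₂ ≤ h) :
    ConcaveOn ℝ s fun c => sSup (S c) := by
  refine ⟨hs, fun c hc d hd a b ha hb hab => ?_⟩
  rw [smul_eq_mul, smul_eq_mul, ← smul_eq_mul, ← smul_eq_mul (a := b),
    ← Real.sSup_smul_of_nonneg ha, ← Real.sSup_smul_of_nonneg hb,
    ← csSup_add (hne c hc).smul_set ((hbdd c hc).smul_of_nonneg ha) (hne d hd).smul_set
      ((hbdd d hd).smul_of_nonneg hb)]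
  refine csSup_le ((hne c hc).smul_set.add (hne d hd).smul_set) ?_
  rintro _ ⟨_, ⟨h₁, hh₁, rfl⟩, _, ⟨h₂, hh₂, rfl⟩, rfl⟩
  obtain ⟨h, hh, hle⟩ := hmix c hc d hd a b ha hb hab h₁ hh₁ h₂ hh₂
  exact hle.trans (le_csSup (hbdd _ (hs hc hd ha hb hab)) hh)

section weakFB

variable {p : ℕ → ℝ}

lemma weakFB_mono {c d : ℝ} (hcd : c ≤ d) : weakFB p c ⊆ weakFB p d := by
  rintro h ⟨x, hx, hxc, rfl⟩
  exact ⟨x, hx, ⟨hxc.1, hxc.2.trans hcd⟩, rfl⟩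

lemma subPairPmf_dirac_zero (hp : IsPmf p) :
    subPairPmf (fun n => if n = 0 then 1 else 0) p = fun n => if n = 0 then 1 else 0 := by
  funext n
  rw [subPairPmf, tsum_eq_single 0 fun i hi => by simp [hi]]
  rcases eq_or_ne n 0 with rfl | hn
  · simpa using hp.2
  · simp [hn, Ne.symm hn]

lemma weakFB_nonempty (hp : IsPmf p) {c : ℝ} (hc : 0 ≤ c) : (weakFB p c).Nonempty := by
  refine ⟨_, fun n => if n = 0 then 1 else 0, ⟨fun n => ?_, ?_⟩, ?_, rfl⟩
  · dsimp only
    split_ifs <;> norm_num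
  · simp
  · rw [subPairPmf_dirac_zero hp]
    have h0 : (fun n : ℕ => (n : ℝ) * if n = 0 then 1 else 0) = 0 := by
      funext n
      split_ifs with hn <;> simp [hn]
    exact ⟨h0 ▸ summable_zero, by simpa [h0] using hc⟩

lemma mem_weakFB_bounds (hp : IsPmf p) {m c h : ℝ} (hpm : MeanLe p m) (hh : h ∈ weakFB p c) :
    0 ≤ h ∧ h ≤ log 2 * (1 + (c + m)) := by
  obtain ⟨x, hx, hxc, rfl⟩ := hh
  have hw := subPairPmf_isPmf hx hp
  exact ⟨(convPmf_isPmf hw hp).hent_nonneg,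
    (convPmf_isPmf hw hp).hent_le (meanLe_convPmf hw hp hxc hpm)⟩

lemma weakFB_bddAbove (hp : IsPmf p) {m : ℝ} (hpm : MeanLe p m) (c : ℝ) :
    BddAbove (weakFB p c) :=
  ⟨_, fun _ hh => (mem_weakFB_bounds hp hpm hh).2⟩

lemma weakFB_convex_comb (hp : IsPmf p) {m c d h₁ h₂ a b : ℝ} (hpm : MeanLe p m)
    (hh₁ : h₁ ∈ weakFB p c) (hh₂ : h₂ ∈ weakFB p d) (ha : 0 ≤ a) (hb : 0 ≤ b)
    (hab : a + b = 1) : ∃ h ∈ weakFB p (a * c + b * d), a * h₁ + b * h₂ ≤ h := by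
  obtain ⟨x₁, hx₁, hxc₁, rfl⟩ := hh₁
  obtain ⟨x₂, hx₂, hxc₂, rfl⟩ := hh₂
  have hw₁ := subPairPmf_isPmf hx₁ hp
  have hw₂ := subPairPmf_isPmf hx₂ hp
  have hy₁ := convPmf_isPmf hw₁ hp
  have hy₂ := convPmf_isPmf hw₂ hp
  have hym₁ := meanLe_convPmf hw₁ hp hxc₁ hpm
  have hym₂ := meanLe_convPmf hw₂ hp hxc₂ hpm
  have hlin : subPairPmf (fun n => a * x₁ n + b * x₂ n) p
      = fun n => a * subPairPmf x₁ p n + b * subPairPmf x₂ p n :=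
    subPairPmf_linear (hasSum_mul_prod_of_isPmf hx₁ hp).summable
      (hasSum_mul_prod_of_isPmf hx₂ hp).summable a b
  refine ⟨_, ⟨_, hx₁.convex_comb hx₂ ha hb hab, ?_, rfl⟩, ?_⟩
  · rw [hlin]
    exact hxc₁.convex_comb hxc₂ ha hb
  · rw [hlin, convPmf_linear]
    exact hent_convex_comb_ge hy₁.1 hy₂.1 ha hb hab (hy₁.summable_negMulLog hym₁.1)
      (hy₂.summable_negMulLog hym₂.1)
      ((hy₁.convex_comb hy₂ ha hb hab).summable_negMulLog (hym₁.convex_comb hym₂ ha hb).1)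

end weakFB

/-- `G c = sup { H((X - S₁)₊ + S₂) : X ⫫ (S₁,S₂), E[(X - S₁)₊] ≤ c }`
is finite (the sup is of a nonempty, bounded-above set), nonnegative, nondecreasing,
and concave on `[0, ∞)`. -/
theorem weakFB_entropy_concave (p : ℕ → ℝ) (hp : IsPmf p)
    (hmean : Summable (fun n : ℕ => (n : ℝ) * p n))
    (G : ℝ → ℝ) (hG : ∀ c : ℝ, G c = sSup (weakFB p c)) :
    (∀ c ∈ Set.Ici (0 : ℝ), (weakFB p c).Nonempty ∧ BddAbove (weakFB p c) ∧ 0 ≤ G c)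
      ∧ MonotoneOn G (Set.Ici (0 : ℝ))
      ∧ ConcaveOn ℝ (Set.Ici (0 : ℝ)) G := by
  obtain rfl : G = fun c => sSup (weakFB p c) := funext hG
  have hpm : MeanLe p (∑' n : ℕ, (n : ℝ) * p n) := ⟨hmean, le_rfl⟩
  have hne : ∀ c ∈ Set.Ici (0 : ℝ), (weakFB p c).Nonempty := fun c hc => weakFB_nonempty hp hc
  have hbdd := weakFB_bddAbove hp hpm
  refine ⟨fun c hc => ⟨hne c hc, hbdd c, ?_⟩,
    fun c hc d _ hcd => csSup_le_csSup (hbdd d) (hne c hc) (weakFB_mono hcd),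
    concaveOn_sSup_of_convex_comb (convex_Ici 0) hne (fun c _ => hbdd c)
      fun c _ d _ a b ha hb hab _ hh₁ _ hh₂ => weakFB_convex_comb hp hpm hh₁ hh₂ ha hb hab⟩
  obtain ⟨h, hh⟩ := hne c hc
  exact (mem_weakFB_bounds hp hpm hh).1.trans (le_csSup (hbdd c) hh)
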